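/- Define T_N : Mₙ(ℂ) → M_{n^N}(ℂ) by T_N(A) = (1/N) ∑_{k=0}^{N-1} I^{⊗(N-1-k)} ⊗ A ⊗ I^{⊗k}. Then for all A, B ∈ Mₙ(ℂ): [T_N(A), T_N(B)] = (1/N)·T_N([A, B]). In particular ‖[T_N(A), T_N(B)]‖ ≤ (1/N)‖[A,B]‖. -/

import Mathlib

/-!
Write `A_k` for `A` acting in the `k`-th tensor factor. Copies placed in different factors
commute, so in `[∑ₖ A_k, ∑ₗ B_l]` only the diagonal terms survive, and `[A_k, B_k] = [A, B]_k`.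
For the norm bound, `A ↦ A_k` is a star-algebra homomorphism between C⋆-algebras, hence
contractive, and `T_N` is an average of such maps.
-/

/-- The ℓ²→ℓ² operator norm of a square complex matrix (arbitrary finite index type). -/
noncomputable def opNorm {m : Type*} [Fintype m] [DecidableEq m] (A : Matrix m m ℂ) : ℝ :=
  ‖Matrix.toEuclideanCLM (𝕜 := ℂ) A‖

/-- The operator `I^{⊗(N-1-k)} ⊗ A ⊗ I^{⊗k}` acting on the `N`-fold tensor power
`(ℂⁿ)^{⊗N}`, realized on the index set `Fin N → Fin n`: `A` acts in the `k`-th tensor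
factor and the identity in all the others. -/
def embedAt {n N : ℕ} (k : Fin N) (A : Matrix (Fin n) (Fin n) ℂ) :
    Matrix (Fin N → Fin n) (Fin N → Fin n) ℂ :=
  Matrix.of fun x y =>
    A (x k) (y k) * ∏ j ∈ Finset.univ.erase k, (if x j = y j then (1 : ℂ) else 0)

/-- The macroscopic-observable map `T_N(A) = (1/N) ∑_{k=0}^{N-1} I^{⊗(N-1-k)} ⊗ A ⊗ I^{⊗k}`. -/
noncomputable def T (n N : ℕ) (A : Matrix (Fin n) (Fin n) ℂ) :
    Matrix (Fin N → Fin n) (Fin N → Fin n) ℂ :=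
  ((N : ℂ))⁻¹ • ∑ k : Fin N, embedAt k A

open Finset Function Matrix
open scoped Matrix.Norms.L2Operator

lemma opNorm_eq_norm {m : Type*} [Fintype m] [DecidableEq m] (A : Matrix m m ℂ) :
    opNorm A = ‖A‖ :=
  rfl

section embedAt

variable {n N : ℕ}

lemma embedAt_apply (k : Fin N) (A : Matrix (Fin n) (Fin n) ℂ) (x y : Fin N → Fin n) :
    embedAt k A x y = if ∀ j ≠ k, x j = y j then A (x k) (y k) else 0 := by
  simp [embedAt, prod_boole]

lemma embedAt_apply_eq_sum (k : Fin N) (A : Matrix (Fin n) (Fin n) ℂ) (x y : Fin N → Fin n) :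
    embedAt k A x y = ∑ i, A (x k) i * if update x k i = y then 1 else 0 := by
  simp [embedAt_apply, update_eq_iff, ite_and]

lemma embedAt_mul_apply (k : Fin N) (A : Matrix (Fin n) (Fin n) ℂ)
    (M : Matrix (Fin N → Fin n) (Fin N → Fin n) ℂ) (x y : Fin N → Fin n) :
    (embedAt k A * M) x y = ∑ i, A (x k) i * M (update x k i) y := by
  simp only [mul_apply, embedAt_apply_eq_sum, sum_mul, mul_assoc]
  rw [sum_comm]
  simp

lemma embedAt_mul (k : Fin N) (A B : Matrix (Fin n) (Fin n) ℂ) :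
    embedAt k A * embedAt k B = embedAt k (A * B) := by
  ext x y
  rw [embedAt_mul_apply, embedAt_apply_eq_sum]
  simp only [embedAt_apply_eq_sum, update_self, update_idem, mul_apply, mul_sum, sum_mul, mul_assoc]
  exact sum_comm

lemma commute_embedAt {k l : Fin N} (hkl : k ≠ l) (A B : Matrix (Fin n) (Fin n) ℂ) :
    Commute (embedAt k A) (embedAt l B) := by
  refine Matrix.ext fun x y => ?_
  rw [embedAt_mul_apply, embedAt_mul_apply]
  simp only [embedAt_apply_eq_sum, update_of_ne hkl, update_of_ne hkl.symm, mul_sum,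
    update_comm hkl]
  rw [sum_comm]
  simp only [mul_left_comm]

lemma embedAt_conjTranspose (k : Fin N) (A : Matrix (Fin n) (Fin n) ℂ) :
    embedAt k Aᴴ = (embedAt k A)ᴴ := by
  ext x y
  simp only [embedAt_apply, conjTranspose_apply, eq_comm (a := x _)]
  split_ifs <;> simp

variable (n) in
def embedAtNonUnitalStarAlgHom (k : Fin N) :
    Matrix (Fin n) (Fin n) ℂ →⋆ₙₐ[ℂ] Matrix (Fin N → Fin n) (Fin N → Fin n) ℂ where
  toFun := embedAt k
  map_smul' c A := by ext x y; simp [embedAt_apply]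
  map_zero' := by ext x y; simp [embedAt_apply]
  map_add' A B := by ext x y; simp [embedAt_apply, ite_add_ite]
  map_mul' A B := (embedAt_mul k A B).symm
  map_star' := embedAt_conjTranspose k

lemma norm_embedAt_le (k : Fin N) (A : Matrix (Fin n) (Fin n) ℂ) : ‖embedAt k A‖ ≤ ‖A‖ :=
  NonUnitalStarAlgHom.norm_apply_le (embedAtNonUnitalStarAlgHom n k) A

lemma embedAt_sub (k : Fin N) (A B : Matrix (Fin n) (Fin n) ℂ) :
    embedAt k (A - B) = embedAt k A - embedAt k B :=
  map_sub (embedAtNonUnitalStarAlgHom n k) A B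

end embedAt

lemma Finset.sum_mul_sum_sub_sum_mul_sum_of_commute {R ι : Type*} [Ring R] (s : Finset ι)
    (a b : ι → R) (h : ∀ k ∈ s, ∀ l ∈ s, k ≠ l → Commute (a k) (b l)) :
    (∑ k ∈ s, a k) * (∑ k ∈ s, b k) - (∑ k ∈ s, b k) * (∑ k ∈ s, a k) =
      ∑ k ∈ s, (a k * b k - b k * a k) := by
  rw [sum_mul_sum, sum_mul_sum, sum_comm (s := s) (f := fun k l => b k * a l), ← sum_sub_distrib]
  refine sum_congr rfl fun k hk => ?_
  rw [← sum_sub_distrib, sum_eq_single_of_mem k hk]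
  intro l hl hlk
  rw [(h k hk l hl hlk.symm).eq, sub_self]

lemma T_commutator (n N : ℕ) (A B : Matrix (Fin n) (Fin n) ℂ) :
    T n N A * T n N B - T n N B * T n N A = ((N : ℂ))⁻¹ • T n N (A * B - B * A) := by
  simp only [T, smul_mul_smul_comm, ← smul_sub, smul_smul, embedAt_mul, embedAt_sub,
    sum_mul_sum_sub_sum_mul_sum_of_commute _ _ _ fun k _ l _ hkl => commute_embedAt hkl A B]

lemma norm_T_le (n N : ℕ) (A : Matrix (Fin n) (Fin n) ℂ) : ‖T n N A‖ ≤ ‖A‖ := by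
  calc ‖T n N A‖ ≤ (N : ℝ)⁻¹ * ∑ k : Fin N, ‖embedAt k A‖ := by
        rw [T, norm_smul, norm_inv, Complex.norm_natCast]
        gcongr
        exact norm_sum_le _ _
    _ ≤ (N : ℝ)⁻¹ * ∑ _k : Fin N, ‖A‖ := by
        gcongr with k
        exact norm_embedAt_le k A
    _ ≤ ‖A‖ := by
        rw [sum_const, card_univ, Fintype.card_fin, nsmul_eq_mul, ← mul_assoc]
        exact mul_le_of_le_one_left (norm_nonneg A) (inv_mul_le_one_of_le₀ le_rfl (by positivity))

theorem stmt_17_general (n N : ℕ) (A B : Matrix (Fin n) (Fin n) ℂ) :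
    T n N A * T n N B - T n N B * T n N A = ((N : ℂ))⁻¹ • T n N (A * B - B * A) ∧
    opNorm (T n N A * T n N B - T n N B * T n N A) ≤ (1 / N) * opNorm (A * B - B * A) := by
  refine ⟨T_commutator n N A B, ?_⟩
  rw [opNorm_eq_norm, opNorm_eq_norm, T_commutator, norm_smul, norm_inv, Complex.norm_natCast, one_div]
  gcongr
  exact norm_T_le n N _

/-- **Commutators of macroscopic observables.**
`[T_N(A), T_N(B)] = (1/N) T_N([A, B])`, and in particular
`‖[T_N(A), T_N(B)]‖ ≤ (1/N) ‖[A, B]‖`. -/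
theorem stmt_17 (n N : ℕ) (hN : 0 < N) (A B : Matrix (Fin n) (Fin n) ℂ) :
    T n N A * T n N B - T n N B * T n N A = ((N : ℂ))⁻¹ • T n N (A * B - B * A) ∧
    opNorm (T n N A * T n N B - T n N B * T n N A) ≤ (1 / N) * opNorm (A * B - B * A) :=
  stmt_17_general n N A B
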